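/- Let Q be an upper triangular n×n real matrix. Consider the reduced MILP in which, for each pair i < j, only the constraints x_i + x_j − z_{ij} ≤ 1 and z_{ij} ≥ 0 are imposed when Q_{ij} > 0, only the constraints z_{ij} ≤ x_i and z_{ij} ≤ x_j are imposed when Q_{ij} < 0, and no constraints are imposed on z_{ij} when Q_{ij} = 0 except that it is fixed to 0. The optimal value of this reduced MILP (minimizing ∑_{i<j} Q_{ij} z_{ij} + ∑_i Q_{ii} x_i over x ∈ {0,1}^n and z real) equals the minimum of x^T Q x over x ∈ {0,1}^n. -/

import Mathlib

/-!
For binary `x` we have `xᵢ² = xᵢ`, so for upper triangular `Q` the value `xᵀQx` is the linear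
objective at `zᵢⱼ = xᵢxⱼ`. Moreover the product `xᵢxⱼ` is both `max 0 (xᵢ + xⱼ - 1)` and
`min xᵢ xⱼ`. When `Qᵢⱼ > 0` the objective pushes `zᵢⱼ` down, so only the lower bounds `zᵢⱼ ≥ 0`,
`zᵢⱼ ≥ xᵢ + xⱼ - 1` matter, and they force `Qᵢⱼ zᵢⱼ ≥ Qᵢⱼ xᵢxⱼ`; symmetrically for `Qᵢⱼ < 0`
with the upper bounds. Hence every feasible point of the reduced MILP is dominated by the
quadratic objective at its `x`, and `zᵢⱼ = xᵢxⱼ` (or `0` where `Qᵢⱼ = 0`) attains it.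
-/

open Finset Matrix

namespace ReducedQUBO

lemma mul_self_of_binary {a : ℝ} (ha : a = 0 ∨ a = 1) : a * a = a := by
  rcases ha with rfl | rfl <;> norm_num

lemma mul_le_of_binary {a b z : ℝ} (ha : a = 0 ∨ a = 1) (hb : b = 0 ∨ b = 1)
    (hz : a + b - z ≤ 1) (hz₀ : 0 ≤ z) : a * b ≤ z := by
  rcases ha with rfl | rfl <;> rcases hb with rfl | rfl <;> linarith

lemma le_mul_of_binary {a b z : ℝ} (ha : a = 0 ∨ a = 1) (hb : b = 0 ∨ b = 1)
    (hza : z ≤ a) (hzb : z ≤ b) : z ≤ a * b := by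
  rcases ha with rfl | rfl <;> rcases hb with rfl | rfl <;> linarith

lemma mul_mul_le_mul_of_binary {q a b z : ℝ} (ha : a = 0 ∨ a = 1) (hb : b = 0 ∨ b = 1)
    (hpos : 0 < q → a + b - z ≤ 1 ∧ 0 ≤ z) (hneg : q < 0 → z ≤ a ∧ z ≤ b) :
    q * (a * b) ≤ q * z := by
  rcases lt_trichotomy q 0 with hq | rfl | hq
  · obtain ⟨hza, hzb⟩ := hneg hq
    exact mul_le_mul_of_nonpos_left (le_mul_of_binary ha hb hza hzb) hq.le
  · simp
  · obtain ⟨hz, hz₀⟩ := hpos hq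
    exact mul_le_mul_of_nonneg_left (mul_le_of_binary ha hb hz hz₀) hq.le

variable {ι : Type*}

def IsBinary (x : ι → ℝ) : Prop := ∀ i, x i = 0 ∨ x i = 1

lemma setOf_isBinary_finite [Finite ι] : {x : ι → ℝ | IsBinary x}.Finite := by
  have h : {x : ι → ℝ | IsBinary x} = Set.pi Set.univ fun _ => ({0, 1} : Set ℝ) := by
    ext x
    simp [IsBinary]
  rw [h]
  exact Set.Finite.pi fun _ => (Set.finite_singleton 1).insert 0

variable [LinearOrder ι]

def Feasible (Q : Matrix ι ι ℝ) (x : ι → ℝ) (z : ι → ι → ℝ) : Prop :=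
  ∀ i j, i < j →
    (0 < Q i j → x i + x j - z i j ≤ 1 ∧ 0 ≤ z i j) ∧
    (Q i j < 0 → z i j ≤ x i ∧ z i j ≤ x j) ∧
    (Q i j = 0 → z i j = 0)

lemma feasible_ite_mul {Q : Matrix ι ι ℝ} {x : ι → ℝ} (hx : IsBinary x) :
    Feasible Q x (fun i j => if Q i j = 0 then 0 else x i * x j) := by
  intro i j _
  dsimp only
  refine ⟨fun hq => ?_, fun hq => ?_, fun hq => if_pos hq⟩
  · rw [if_neg hq.ne']
    rcases hx i with h | h <;> rcases hx j with h' | h' <;> norm_num [h, h']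
  · rw [if_neg hq.ne]
    rcases hx i with h | h <;> rcases hx j with h' | h' <;> norm_num [h, h']

variable [Fintype ι]

def objective (Q : Matrix ι ι ℝ) (x : ι → ℝ) (z : ι → ι → ℝ) : ℝ :=
  (∑ i, ∑ j ∈ univ.filter (fun j => i < j), Q i j * z i j) + ∑ i, Q i i * x i

lemma dotProduct_mulVec_eq_objective {Q : Matrix ι ι ℝ} (hQ : ∀ i j, j < i → Q i j = 0)
    {x : ι → ℝ} (hx : IsBinary x) :
    x ⬝ᵥ Q *ᵥ x = objective Q x (fun i j => x i * x j) := by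
  have row : ∀ i, ∑ j, x i * (Q i j * x j) =
      (∑ j ∈ univ.filter (fun j => i < j), Q i j * (x i * x j)) + Q i i * x i := by
    intro i
    rw [← sum_filter_add_sum_filter_not univ (fun j => i < j)]
    congr 1
    · exact sum_congr rfl fun j _ => by ring
    · rw [sum_eq_single_of_mem i (by simp)]
      · rw [mul_left_comm, mul_self_of_binary (hx i)]
      · intro j hj hji
        have hji' : j < i := lt_of_le_of_ne (by simpa using hj) hji
        simp [hQ i j hji']
  simp only [objective, dotProduct, mulVec, mul_sum, ← sum_add_distrib, row]

lemma objective_mul_le {Q : Matrix ι ι ℝ} {x : ι → ℝ} {z : ι → ι → ℝ} (hx : IsBinary x)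
    (hz : Feasible Q x z) : objective Q x (fun i j => x i * x j) ≤ objective Q x z := by
  refine add_le_add_left (sum_le_sum fun i _ => sum_le_sum fun j hj => ?_) _
  obtain ⟨hpos, hneg, -⟩ := hz i j (mem_filter.mp hj).2
  exact mul_mul_le_mul_of_binary (hx i) (hx j) hpos hneg

lemma objective_ite_mul (Q : Matrix ι ι ℝ) (x : ι → ℝ) :
    objective Q x (fun i j => if Q i j = 0 then 0 else x i * x j) =
      objective Q x (fun i j => x i * x j) := by
  unfold objective
  congr 1
  refine sum_congr rfl fun i _ => sum_congr rfl fun j _ => ?_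
  by_cases h : Q i j = 0 <;> simp [h]

end ReducedQUBO

lemma IsLeast.of_subset_of_forall_exists_le {α : Type*} [Preorder α] {A B : Set α} {m : α}
    (hB : IsLeast B m) (hBA : B ⊆ A) (hdom : ∀ a ∈ A, ∃ b ∈ B, b ≤ a) : IsLeast A m :=
  ⟨hBA hB.1, fun a ha => by
    obtain ⟨b, hb, hba⟩ := hdom a ha
    exact (hB.2 hb).trans hba⟩

open ReducedQUBO in
/-- Let `Q` be an upper triangular n×n real matrix. In the reduced
MILP, for each pair `i < j`, only `x_i + x_j − z_{ij} ≤ 1` and `z_{ij} ≥ 0` are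
imposed when `Q_{ij} > 0`, only `z_{ij} ≤ x_i` and `z_{ij} ≤ x_j` are imposed
when `Q_{ij} < 0`, and `z_{ij}` is fixed to `0` when `Q_{ij} = 0`. The optimal
value of this reduced MILP equals the minimum of `xᵀ Q x` over `x ∈ {0,1}ⁿ`. -/
theorem stmt_8 (n : ℕ) (Q : Matrix (Fin n) (Fin n) ℝ)
    (hQ : ∀ i j : Fin n, j < i → Q i j = 0) :
    sInf {v : ℝ | ∃ (x : Fin n → ℝ) (z : Fin n → Fin n → ℝ),
        (∀ i, x i = 0 ∨ x i = 1) ∧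
        (∀ i j : Fin n, i < j →
          (0 < Q i j → x i + x j - z i j ≤ 1 ∧ 0 ≤ z i j) ∧
          (Q i j < 0 → z i j ≤ x i ∧ z i j ≤ x j) ∧
          (Q i j = 0 → z i j = 0)) ∧
        v = (∑ i, ∑ j ∈ univ.filter (fun j => i < j), Q i j * z i j) +
          ∑ i, Q i i * x i} =
      sInf {v : ℝ | ∃ x : Fin n → ℝ, (∀ i, x i = 0 ∨ x i = 1) ∧
        v = x ⬝ᵥ Q.mulVec x} := by
  obtain ⟨x₀, hx₀, hmin⟩ := Set.exists_min_image _ (fun x => x ⬝ᵥ Q *ᵥ x)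
    setOf_isBinary_finite ⟨0, fun _ => Or.inl rfl⟩
  have hleast : IsLeast {v : ℝ | ∃ x : Fin n → ℝ, (∀ i, x i = 0 ∨ x i = 1) ∧
      v = x ⬝ᵥ Q.mulVec x} (x₀ ⬝ᵥ Q *ᵥ x₀) :=
    ⟨⟨x₀, hx₀, rfl⟩, by rintro _ ⟨x, hx, rfl⟩; exact hmin x hx⟩
  refine ((hleast.of_subset_of_forall_exists_le ?_ ?_).csInf_eq).trans hleast.csInf_eq.symm
  · rintro _ ⟨x, hx, rfl⟩
    refine ⟨x, _, hx, feasible_ite_mul hx, ?_⟩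
    exact (dotProduct_mulVec_eq_objective hQ hx).trans (objective_ite_mul Q x).symm
  · rintro _ ⟨x, z, hx, hz, rfl⟩
    refine ⟨_, ⟨x, hx, rfl⟩, ?_⟩
    rw [dotProduct_mulVec_eq_objective hQ hx]
    exact objective_mul_le hx hz
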